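/- Let Γ be a group with symmetric weight function φ : Γ → [0,∞), and suppose ∑_{γ∈Γ} φ(γ) = ∞. Suppose there exists a self-avoiding walk π = (id, π_1, …, π_n) with n ≥ 1 and w(π) > 0. Then the total weight of (n+1)-step self-avoiding walks from the identity is infinite. -/
import Mathlib


open scoped ENNReal

/-- An `n`-step self-avoiding walk from the identity on the complete graph over `Γ`. -/
def GroupSAW {Γ : Type*} [Group Γ] (n : ℕ) (π : Fin (n + 1) → Γ) : Prop :=
  Function.Injective π ∧ π 0 = 1

/-- The `φ`-weight of a walk: the product of the step weights. -/
noncomputable def gWeight {Γ : Type*} [Group Γ] (φ : Γ → ℝ) (n : ℕ)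
    (π : Fin (n + 1) → Γ) : ℝ :=
  ∏ i : Fin n, φ ((π i.castSucc)⁻¹ * π i.succ)

private lemma tsum_compl_finset_eq_top {Γ : Type*} (f : Γ → ℝ≥0∞) (S : Finset Γ)
    (hf : ∀ γ, f γ ≠ ⊤) (h : ∑' γ : Γ, f γ = ⊤) : ∑' γ : {γ : Γ // γ ∉ S}, f γ.1 = ⊤ := by
  classical
  have hpt : ∀ γ : Γ, f γ = ({γ : Γ | γ ∉ S}).indicator f γ
      + (↑S : Set Γ).indicator f γ := by
    intro γ
    by_cases hγ : γ ∈ S <;> simp [Set.indicator, hγ]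
  have hsplit : ∑' γ : Γ, f γ = (∑' γ : Γ, ({γ : Γ | γ ∉ S}).indicator f γ)
      + ∑' γ : Γ, (↑S : Set Γ).indicator f γ := by
    rw [← ENNReal.tsum_add]
    exact tsum_congr hpt
  have e1 : ∑' γ : {γ : Γ // γ ∉ S}, f γ.1
      = ∑' γ : Γ, ({γ : Γ | γ ∉ S}).indicator f γ := tsum_subtype _ f
  have e2 : ∑' γ : Γ, (↑S : Set Γ).indicator f γ = ∑' γ : (↑S : Set Γ), f γ.1 :=
    (tsum_subtype _ f).symm
  have hfin : ∑' γ : Γ, (↑S : Set Γ).indicator f γ ≠ ⊤ := by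
    rw [e2, Finset.tsum_subtype' S f]
    exact (ENNReal.sum_lt_top.2 fun γ _ => lt_top_iff_ne_top.2 (hf γ)).ne
  rw [h] at hsplit
  rw [e1]
  rcases ENNReal.add_eq_top.1 hsplit.symm with h' | h'
  · exact h'
  · exact absurd h' hfin

/-- Remark 3.12: if the symmetric weight function `φ` is not summable
(`∑_γ φ(γ) = ∞`) and there is an `n`-step SAW `π` from the identity with
`w(π) > 0` and `n ≥ 1`, then the total weight of `(n+1)`-step SAWs from the
identity is infinite. -/
theorem saw_weight_infinite_of_nonsummable {Γ : Type*} [Group Γ]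
    (φ : Γ → ℝ) (hφnn : ∀ γ, 0 ≤ φ γ) (hφ1 : φ 1 = 0)
    (hφsym : ∀ γ : Γ, φ γ⁻¹ = φ γ)
    (hdiv : ∑' γ : Γ, ENNReal.ofReal (φ γ) = ⊤)
    (n : ℕ) (hn : 1 ≤ n) (π : Fin (n + 1) → Γ)
    (hπ : GroupSAW n π) (hw : 0 < gWeight φ n π) :
    ∑' ρ : {ρ : Fin (n + 2) → Γ // GroupSAW (n + 1) ρ},
      ENNReal.ofReal (gWeight φ (n + 1) ρ.1) = ⊤ := by
  classical
  set S : Finset Γ := Finset.image (fun j : Fin (n + 1) => (π j)⁻¹) Finset.univ with hS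
  have hsaw : ∀ γ : Γ, γ ∉ S → GroupSAW (n + 1) (Fin.cons 1 fun i => γ * π i) := by
    intro γ hγ
    constructor
    · intro a b hab
      induction a using Fin.cases with
      | zero =>
        induction b using Fin.cases with
        | zero => rfl
        | succ j =>
          exfalso
          simp only [Fin.cons_zero, Fin.cons_succ] at hab
          exact hγ (Finset.mem_image.2 ⟨j, Finset.mem_univ _,
            (eq_inv_of_mul_eq_one_left hab.symm).symm⟩)
      | succ i =>
        induction b using Fin.cases with
        | zero =>
          exfalso
          simp only [Fin.cons_zero, Fin.cons_succ] at hab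
          exact hγ (Finset.mem_image.2 ⟨i, Finset.mem_univ _,
            (eq_inv_of_mul_eq_one_left hab).symm⟩)
        | succ j =>
          simp only [Fin.cons_succ, mul_right_cancel_iff, mul_left_cancel_iff] at hab
          exact congrArg Fin.succ (hπ.1 hab)
    · simp
  have hweight : ∀ γ : Γ,
      gWeight φ (n + 1) (Fin.cons 1 fun i => γ * π i) = φ γ * gWeight φ n π := by
    intro γ
    unfold gWeight
    rw [Fin.prod_univ_succ]
    congr 1
    · simp [hπ.2]
    · apply Finset.prod_congr rfl
      intro i _
      rw [← Fin.succ_castSucc, Fin.cons_succ, Fin.cons_succ]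
      congr 1
      group
  let f : {γ : Γ // γ ∉ S} → {ρ : Fin (n + 2) → Γ // GroupSAW (n + 1) ρ} :=
    fun γ => ⟨Fin.cons 1 fun i => γ.1 * π i, hsaw γ.1 γ.2⟩
  have hf : Function.Injective f := by
    intro a b hab
    have := congrArg (fun ρ => ρ.1 (Fin.succ 0)) hab
    simp only [f, Fin.cons_succ] at this
    exact Subtype.ext (mul_right_cancel this)
  have hle := ENNReal.tsum_comp_le_tsum_of_injective hf
    (fun ρ => ENNReal.ofReal (gWeight φ (n + 1) ρ.1))
  have hsum : ∑' γ : {γ : Γ // γ ∉ S},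
      ENNReal.ofReal (gWeight φ (n + 1) (f γ).1) = ⊤ := by
    have h1 : ∀ γ : {γ : Γ // γ ∉ S},
        ENNReal.ofReal (gWeight φ (n + 1) (f γ).1)
          = ENNReal.ofReal (φ γ.1) * ENNReal.ofReal (gWeight φ n π) := by
      intro γ
      simp only [f, hweight γ.1]
      rw [ENNReal.ofReal_mul (hφnn _)]
    rw [tsum_congr h1, ENNReal.tsum_mul_right]
    apply ENNReal.mul_eq_top.2
    right
    exact ⟨tsum_compl_finset_eq_top _ S (fun _ => ENNReal.ofReal_ne_top) hdiv, (ENNReal.ofReal_pos.2 hw).ne'⟩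
  rw [eq_top_iff, ← hsum]
  exact hle
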